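/- Let X be a compact metrizable space, let p ∈ [1, ∞) with p ≠ 2, and let a ∈ M_n(C(X)) be regarded as a continuous function a : X → M_n(ℂ). Then the L^p operator matrix norm of a equals sup_{x ∈ X} ‖a(x)‖_p, where ‖·‖_p denotes the operator norm on M_n(ℂ) acting on ℓ^p_n. Concretely: if μ is a σ-finite Borel measure on X with full support and C(X) is represented on L^p(X,μ) by multiplication operators, then the norm of the induced operator of a on ℓ^p_n ⊗_p L^p(X,μ) equals sup_{x ∈ X} ‖a(x)‖_p. -/

import Mathlib

/-!
The operator `T` is decomposable: almost everywhere it acts on the fibre `ξ(x) ∈ ℓ^p_n` by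
`a(x)`, and for `p < ∞` the norm of `ℓ^p_n(L^p(μ))` is the `L^p` norm of the fibrewise `ℓ^p`
norms. Fibrewise bounds therefore give `‖T‖ ≤ sup ‖a(x)‖`. Conversely, by continuity and full
support there is a set `s` of positive finite measure on which `a` is `ε`-close to `a(x₀)`;
testing `T` on `v ⊗ 1_s` gives `‖a(x₀)‖ ≤ ‖T‖ + ε`.
-/

open scoped ENNReal
open MeasureTheory

/-- A `n × n` complex matrix, viewed as a bounded operator on `ℓ^p_n`. -/
noncomputable def matrixLp (p : ℝ≥0∞) [Fact (1 ≤ p)] {n : ℕ}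
    (M : Matrix (Fin n) (Fin n) ℂ) :
    PiLp p (fun _ : Fin n => ℂ) →L[ℂ] PiLp p (fun _ : Fin n => ℂ) :=
  LinearMap.toContinuousLinearMap
    ((WithLp.linearEquiv p ℂ (∀ _ : Fin n, ℂ)).symm.toLinearMap ∘ₗ
      M.mulVecLin ∘ₗ (WithLp.linearEquiv p ℂ (∀ _ : Fin n, ℂ)).toLinearMap)

namespace PiLp

theorem enorm_rpow_eq_sum {ι : Type*} [Fintype ι] {β : ι → Type*}
    [∀ i, SeminormedAddCommGroup (β i)] {p : ℝ≥0∞} [Fact (1 ≤ p)] (hp : p ≠ ⊤) (f : PiLp p β) :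
    ‖f‖ₑ ^ p.toReal = ∑ i, ‖f i‖ₑ ^ p.toReal := by
  have hp0 : 0 < p.toReal := p.toReal_pos_iff_ne_top.mpr hp
  have h : ‖f‖₊ ^ p.toReal = ∑ i, ‖f i‖₊ ^ p.toReal := by
    rw [nnnorm_eq_sum hp, ← NNReal.rpow_mul, one_div_mul_cancel hp0.ne', NNReal.rpow_one]
  simp only [enorm_eq_nnnorm, ← ENNReal.coe_rpow_of_nonneg _ hp0.le, ← ENNReal.ofNNReal_finsetSum,
    h]

theorem norm_eq_mul_of_forall_norm_eq {ι : Type*} [Fintype ι] {β γ : ι → Type*}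
    [∀ i, SeminormedAddCommGroup (β i)] [∀ i, SeminormedAddCommGroup (γ i)]
    {p : ℝ≥0∞} [Fact (1 ≤ p)] (hp : p ≠ ⊤) {f : PiLp p β} {g : PiLp p γ} {c : ℝ} (hc : 0 ≤ c)
    (h : ∀ i, ‖f i‖ = c * ‖g i‖) : ‖f‖ = c * ‖g‖ := by
  have hp0 : 0 < p.toReal := p.toReal_pos_iff_ne_top.mpr hp
  rw [norm_eq_sum hp0, norm_eq_sum hp0]
  simp only [h, Real.mul_rpow hc (norm_nonneg _)]
  rw [← Finset.mul_sum, Real.mul_rpow (by positivity) (by positivity), one_div,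
    Real.rpow_rpow_inv hc hp0.ne']

end PiLp

namespace MeasureTheory.Lp

theorem enorm_rpow_eq_lintegral {X E : Type*} [MeasurableSpace X] {μ : Measure X}
    [NormedAddCommGroup E] {p : ℝ≥0∞} [Fact (1 ≤ p)] (hp : p ≠ ⊤) (f : Lp E p μ) :
    ‖f‖ₑ ^ p.toReal = ∫⁻ x, ‖f x‖ₑ ^ p.toReal ∂μ := by
  have hp0 : p ≠ 0 := (one_pos.trans_le Fact.out).ne'
  rw [enorm_def, eLpNorm_eq_eLpNorm' hp0 hp,
    lintegral_rpow_enorm_eq_rpow_eLpNorm' (p.toReal_pos_iff_ne_top.mpr hp)]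

end MeasureTheory.Lp

section Fiber

variable {X : Type*} [MeasurableSpace X] {μ : Measure X} {p : ℝ≥0∞}
  {ι κ : Type*} [Fintype ι] [Fintype κ]
  {E F : Type*} [NormedAddCommGroup E] [NormedAddCommGroup F]

noncomputable def piFiber (ξ : PiLp p (fun _ : ι => Lp E p μ)) (x : X) :
    PiLp p (fun _ : ι => E) :=
  WithLp.toLp p fun i => ξ i x

theorem enorm_rpow_eq_lintegral_piFiber [Fact (1 ≤ p)] (hp : p ≠ ⊤)
    (ξ : PiLp p (fun _ : ι => Lp E p μ)) :
    ‖ξ‖ₑ ^ p.toReal = ∫⁻ x, ‖piFiber ξ x‖ₑ ^ p.toReal ∂μ := by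
  simp only [PiLp.enorm_rpow_eq_sum hp, Lp.enorm_rpow_eq_lintegral hp, piFiber]
  exact (lintegral_finsetSum' _ fun i _ =>
    (Lp.aestronglyMeasurable (ξ i)).enorm.pow_const _).symm

theorem norm_le_of_ae_norm_piFiber_le [Fact (1 ≤ p)] (hp : p ≠ ⊤)
    {ξ : PiLp p (fun _ : ι => Lp E p μ)} {η : PiLp p (fun _ : κ => Lp F p μ)} {C : ℝ} (hC : 0 ≤ C)
    (h : ∀ᵐ x ∂μ, ‖piFiber η x‖ ≤ C * ‖piFiber ξ x‖) : ‖η‖ ≤ C * ‖ξ‖ := by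
  have hp0 : 0 < p.toReal := p.toReal_pos_iff_ne_top.mpr hp
  suffices ‖η‖ₑ ^ p.toReal ≤ (ENNReal.ofReal C * ‖ξ‖ₑ) ^ p.toReal by
    rw [ENNReal.rpow_le_rpow_iff hp0, ← ofReal_norm, ← ofReal_norm, ← ENNReal.ofReal_mul hC,
      ENNReal.ofReal_le_ofReal_iff (by positivity)] at this
    exact this
  rw [ENNReal.mul_rpow_of_nonneg _ _ hp0.le, enorm_rpow_eq_lintegral_piFiber hp,
    enorm_rpow_eq_lintegral_piFiber hp, ← lintegral_const_mul' _ _ (by finiteness)]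
  refine lintegral_mono_ae (h.mono fun x hx => ?_)
  rw [← ENNReal.mul_rpow_of_nonneg _ _ hp0.le]
  gcongr
  rw [← ofReal_norm, ← ofReal_norm, ← ENNReal.ofReal_mul hC]
  exact ENNReal.ofReal_le_ofReal hx

theorem piFiber_sub_ae_eq (ξ η : PiLp p (fun _ : ι => Lp E p μ)) :
    ∀ᵐ x ∂μ, piFiber (ξ - η) x = piFiber ξ x - piFiber η x := by
  filter_upwards [ae_all_iff.2 fun i => Lp.coeFn_sub (ξ i) (η i)] with x hx
  ext i
  exact hx i

section Indicator

variable {s : Set X} (hs : MeasurableSet s) (hμs : μ s ≠ ⊤)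

noncomputable def indicatorConstPiLp (p : ℝ≥0∞) (v : PiLp p (fun _ : ι => E)) :
    PiLp p (fun _ : ι => Lp E p μ) :=
  WithLp.toLp p fun i => indicatorConstLp p hs hμs (v i)

theorem norm_indicatorConstPiLp [Fact (1 ≤ p)] (hp : p ≠ ⊤) (v : PiLp p (fun _ : ι => E)) :
    ‖indicatorConstPiLp hs hμs p v‖ = μ.real s ^ (1 / p.toReal) * ‖v‖ :=
  PiLp.norm_eq_mul_of_forall_norm_eq hp (by positivity) fun i => by
    rw [indicatorConstPiLp, PiLp.toLp_apply,
      norm_indicatorConstLp (one_pos.trans_le Fact.out).ne' hp, mul_comm]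

theorem piFiber_indicatorConstPiLp_ae_eq (v : PiLp p (fun _ : ι => E)) :
    ∀ᵐ x ∂μ, piFiber (indicatorConstPiLp hs hμs p v) x = s.indicator (fun _ => v) x := by
  filter_upwards [ae_all_iff.2 fun i =>
    indicatorConstLp_coeFn (p := p) (hs := hs) (hμs := hμs) (c := v i)] with x hx
  ext i
  by_cases hx' : x ∈ s <;> simp [piFiber, indicatorConstPiLp, hx, hx']

end Indicator

section Decomposable

variable {𝕜 : Type*} [NontriviallyNormedField 𝕜] [NormedSpace 𝕜 E] [NormedSpace 𝕜 F]
  [Fact (1 ≤ p)]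
  {A : X → PiLp p (fun _ : ι => E) →L[𝕜] PiLp p (fun _ : κ => F)}
  {T : PiLp p (fun _ : ι => Lp E p μ) →L[𝕜] PiLp p (fun _ : κ => Lp F p μ)}

theorem opNorm_le_of_ae_piFiber_eq (hp : p ≠ ⊤)
    (hT : ∀ ξ, ∀ᵐ x ∂μ, piFiber (T ξ) x = A x (piFiber ξ x)) {C : ℝ} (hC : 0 ≤ C)
    (hA : ∀ x, ‖A x‖ ≤ C) : ‖T‖ ≤ C :=
  T.opNorm_le_bound hC fun ξ => norm_le_of_ae_norm_piFiber_le hp hC <|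
    (hT ξ).mono fun x hx => hx ▸ (A x).le_of_opNorm_le (hA x) _

theorem norm_le_opNorm_of_ae_piFiber_eq [TopologicalSpace X] [OpensMeasurableSpace X]
    [SigmaFinite μ] [μ.IsOpenPosMeasure] (hp : p ≠ ⊤)
    (hT : ∀ ξ, ∀ᵐ x ∂μ, piFiber (T ξ) x = A x (piFiber ξ x))
    {x₀ : X} (hA : ContinuousAt A x₀) : ‖A x₀‖ ≤ ‖T‖ := by
  refine le_of_forall_pos_le_add fun ε hε => ?_
  obtain ⟨U, hAU, hU, hx₀U⟩ := mem_nhds_iff.1 (hA (Metric.ball_mem_nhds (A x₀) hε))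
  obtain ⟨s, hs, hsU, hs0, hsμ⟩ :=
    Measure.exists_subset_measure_lt_top hU.measurableSet (hU.measure_pos μ ⟨x₀, hx₀U⟩)
  refine (A x₀).opNorm_le_bound (by positivity) fun v => ?_
  have hξ := piFiber_indicatorConstPiLp_ae_eq hs hsμ.ne v
  have hη := piFiber_indicatorConstPiLp_ae_eq hs hsμ.ne (A x₀ v)
  set ξ := indicatorConstPiLp hs hsμ.ne p v
  set η := indicatorConstPiLp hs hsμ.ne p (A x₀ v)
  have hdiff : ∀ᵐ x ∂μ, piFiber (η - T ξ) x = (A x₀ - A x) (s.indicator (fun _ => v) x) := by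
    filter_upwards [piFiber_sub_ae_eq η (T ξ), hT ξ, hξ, hη] with x hsub hTx hξx hηx
    by_cases hx : x ∈ s <;> simp [hsub, hTx, hξx, hηx, hx]
  have hclose : ‖η - T ξ‖ ≤ ε * ‖ξ‖ := by
    refine norm_le_of_ae_norm_piFiber_le hp hε.le ?_
    filter_upwards [hdiff, hξ] with x hx hξx
    rw [hx, hξx]
    by_cases hxs : x ∈ s
    · simp only [Set.indicator_of_mem hxs]
      refine (A x₀ - A x).le_of_opNorm_le ?_ v
      rw [← dist_eq_norm']
      exact (hAU (hsU hxs)).le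
    · simp [hxs]
  have hm : 0 < μ.real s ^ (1 / p.toReal) :=
    Real.rpow_pos_of_pos (ENNReal.toReal_pos hs0.ne' hsμ.ne) _
  have hbound := calc
    μ.real s ^ (1 / p.toReal) * ‖A x₀ v‖ = ‖η‖ := (norm_indicatorConstPiLp hs _ hp _).symm
    _ ≤ ‖T ξ‖ + ‖η - T ξ‖ := norm_le_insert' _ _
    _ ≤ ‖T‖ * ‖ξ‖ + ε * ‖ξ‖ := add_le_add (T.le_opNorm ξ) hclose
    _ = μ.real s ^ (1 / p.toReal) * ((‖T‖ + ε) * ‖v‖) := by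
      rw [norm_indicatorConstPiLp hs _ hp]; ring
  exact le_of_mul_le_mul_left hbound hm

theorem opNorm_eq_iSup_of_ae_piFiber_eq [TopologicalSpace X] [CompactSpace X]
    [OpensMeasurableSpace X] [SigmaFinite μ] [μ.IsOpenPosMeasure] (hp : p ≠ ⊤)
    (hT : ∀ ξ, ∀ᵐ x ∂μ, piFiber (T ξ) x = A x (piFiber ξ x)) (hA : Continuous A) :
    ‖T‖ = ⨆ x, ‖A x‖ :=
  le_antisymm
    (opNorm_le_of_ae_piFiber_eq hp hT (Real.iSup_nonneg fun _ => norm_nonneg _)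
      (le_ciSup (isCompact_range (continuous_norm.comp hA)).bddAbove))
    (Real.iSup_le (fun _ => norm_le_opNorm_of_ae_piFiber_eq hp hT hA.continuousAt)
      (norm_nonneg T))

end Decomposable

end Fiber

theorem matrixLp_eq_toLpLin (p : ℝ≥0∞) [Fact (1 ≤ p)] {n : ℕ} (M : Matrix (Fin n) (Fin n) ℂ) :
    matrixLp p M = (Matrix.toLpLin p p M).toContinuousLinearMap :=
  rfl

theorem continuous_matrixLp (p : ℝ≥0∞) [Fact (1 ≤ p)] (n : ℕ) :
    Continuous (matrixLp p : Matrix (Fin n) (Fin n) ℂ → _) := by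
  simp only [funext (matrixLp_eq_toLpLin p)]
  exact ((Matrix.toLpLin (R := ℂ) (m := Fin n) (n := Fin n) p p).trans
    LinearMap.toContinuousLinearMap).continuous_of_finiteDimensional

theorem piFiber_ae_eq_matrixLp {X : Type*} [TopologicalSpace X] [MeasurableSpace X]
    [OpensMeasurableSpace X] {μ : Measure X} (p : ℝ≥0∞) [Fact (1 ≤ p)] {n : ℕ}
    (a : C(X, Matrix (Fin n) (Fin n) ℂ))
    (T : PiLp p (fun _ : Fin n => Lp ℂ p μ) →L[ℂ] PiLp p (fun _ : Fin n => Lp ℂ p μ))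
    (hT : ∀ (ξ : PiLp p (fun _ : Fin n => Lp ℂ p μ)) (j : Fin n),
      ((T ξ j : Lp ℂ p μ) : X →ₘ[μ] ℂ) =
        ∑ k, MeasureTheory.AEEqFun.mk (fun x => a x j k)
            (((continuous_apply k).comp
              ((continuous_apply j).comp a.continuous)).aestronglyMeasurable) *
          ((ξ k : Lp ℂ p μ) : X →ₘ[μ] ℂ))
    (ξ : PiLp p (fun _ : Fin n => Lp ℂ p μ)) :
    ∀ᵐ x ∂μ, piFiber (T ξ) x = matrixLp p (a x) (piFiber ξ x) := by
  refine (ae_all_iff.2 fun j => ?_).mono fun x hx => by ext j; exact hx j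
  change ((T ξ j : Lp ℂ p μ) : X →ₘ[μ] ℂ) =ᵐ[μ] _
  rw [hT ξ j]
  have hmeas (k : Fin n) : AEStronglyMeasurable (fun x => a x j k) μ :=
    ((continuous_apply k).comp ((continuous_apply j).comp a.continuous)).aestronglyMeasurable
  filter_upwards [AEEqFun.coeFn_fun_finsetSum (μ := μ) (γ := ℂ) Finset.univ
    fun k => AEEqFun.mk _ (hmeas k) * ((ξ k : Lp ℂ p μ) : X →ₘ[μ] ℂ), ae_all_iff.2 fun k =>
    AEEqFun.coeFn_mul (AEEqFun.mk _ (hmeas k)) ((ξ k : Lp ℂ p μ) : X →ₘ[μ] ℂ),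
    ae_all_iff.2 fun k => AEEqFun.coeFn_mk _ (hmeas k)] with x hsum hmul hmk
  rw [hsum]
  simp [hmul, hmk, piFiber, matrixLp_eq_toLpLin, Matrix.mulVec, dotProduct]

theorem stmt_18_general (p : ℝ≥0∞) [Fact (1 ≤ p)] (hp : p ≠ ⊤)
    {X : Type*} [TopologicalSpace X] [CompactSpace X]
    [MeasurableSpace X] [BorelSpace X]
    (μ : Measure X) [SigmaFinite μ] [μ.IsOpenPosMeasure]
    (n : ℕ) (a : C(X, Matrix (Fin n) (Fin n) ℂ))
    (T : PiLp p (fun _ : Fin n => Lp ℂ p μ) →L[ℂ] PiLp p (fun _ : Fin n => Lp ℂ p μ))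
    (hT : ∀ (ξ : PiLp p (fun _ : Fin n => Lp ℂ p μ)) (j : Fin n),
      ((T ξ j : Lp ℂ p μ) : X →ₘ[μ] ℂ) =
        ∑ k, MeasureTheory.AEEqFun.mk (fun x => a x j k)
            (((continuous_apply k).comp
              ((continuous_apply j).comp a.continuous)).aestronglyMeasurable) *
          ((ξ k : Lp ℂ p μ) : X →ₘ[μ] ℂ)) :
    ‖T‖ = ⨆ x : X, ‖matrixLp p (a x)‖ :=
  opNorm_eq_iSup_of_ae_piFiber_eq hp (piFiber_ae_eq_matrixLp p a T hT)
    ((continuous_matrixLp p n).comp a.continuous)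

/-- Let `X` be compact metrizable, `p ∈ [1, ∞)`, `p ≠ 2`, and let
`a ∈ M_n(C(X)) ≅ C(X, M_n(ℂ))`.  If `μ` is a σ-finite Borel measure on `X` of full
support and `T` is the operator induced by `a` on `ℓ^p_n ⊗_p L^p(X, μ)` (matrix
multiplication in the `ℓ^p_n` coordinate, pointwise multiplication in the `L^p(X, μ)`
coordinate), then `‖T‖ = sup_{x ∈ X} ‖a(x)‖_p`, the `L^p` operator matrix norm of `a`. -/
theorem stmt_18 (p : ℝ≥0∞) [Fact (1 ≤ p)] (hp : p ≠ ⊤) (hp2 : p ≠ 2)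
    {X : Type*} [TopologicalSpace X] [CompactSpace X] [TopologicalSpace.MetrizableSpace X]
    [MeasurableSpace X] [BorelSpace X]
    (μ : Measure X) [SigmaFinite μ] [μ.IsOpenPosMeasure]
    (n : ℕ) (a : C(X, Matrix (Fin n) (Fin n) ℂ))
    (T : PiLp p (fun _ : Fin n => Lp ℂ p μ) →L[ℂ] PiLp p (fun _ : Fin n => Lp ℂ p μ))
    (hT : ∀ (ξ : PiLp p (fun _ : Fin n => Lp ℂ p μ)) (j : Fin n),
      ((T ξ j : Lp ℂ p μ) : X →ₘ[μ] ℂ) =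
        ∑ k, MeasureTheory.AEEqFun.mk (fun x => a x j k)
            (((continuous_apply k).comp
              ((continuous_apply j).comp a.continuous)).aestronglyMeasurable) *
          ((ξ k : Lp ℂ p μ) : X →ₘ[μ] ℂ)) :
    ‖T‖ = ⨆ x : X, ‖matrixLp p (a x)‖ :=
  stmt_18_general p hp μ n a T hT
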